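/- arXiv:1609.05661 — 2 statements merged into one kernel-verified Lean document; each statement's English description precedes it below -/
import Mathlib

section
/- Let Ω be a finite nonempty set. A functional P̲ : (Ω → ℝ) → ℝ satisfies (P1) P̲(f) ≥ min_{x∈Ω} f(x) for all f, (P2) P̲(λf) = λ·P̲(f) for all f and all λ ≥ 0, and (P3) P̲(f + g) ≥ P̲(f) + P̲(g) for all f, g, if and only if there exists a nonempty compact convex set M of probability mass vectors on Ω such that P̲(f) = min_{p∈M} ⟨p, f⟩ for every gamble f. -/
open scoped BigOperators

/-- Inner product of gambles: `⟨f,g⟩ = ∑ x, f x * g x`. -/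
noncomputable def ip {Ω : Type*} [Fintype Ω] (f g : Ω → ℝ) : ℝ := ∑ x, f x * g x

/-- A probability mass vector on `Ω`. -/
def IsPMV {Ω : Type*} [Fintype Ω] (p : Ω → ℝ) : Prop :=
  (∀ x, 0 ≤ p x) ∧ ∑ x, p x = 1

/-!
Under (P1)–(P3) `lP` is superlinear, so Hahn–Banach, applied to the sublinear `x ↦ -lP (-x)` on
the line through a gamble `f`, gives a linear functional dominating `lP` and agreeing with it
at `f`; by (P1) such a functional is a probability mass vector. Hence `lP` is the attained
lower envelope of its credal set, the intersection of the simplex with closed half-spaces.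
Conversely, a lower envelope of expectations is superlinear and bounded below by the minimum.
-/

open Finset

theorem mul_le_neg_apply_neg_smul {E : Type*} [AddCommGroup E] [Module ℝ E] {φ : E → ℝ}
    (hom : ∀ (x : E) (c : ℝ), 0 ≤ c → φ (c • x) = c * φ x)
    (add : ∀ x y, φ x + φ y ≤ φ (x + y)) (x : E) (c : ℝ) :
    c * φ x ≤ -φ (-(c • x)) := by
  have φ0 : φ 0 = 0 := by simpa using hom 0 0 le_rfl
  rcases le_total 0 c with hc | hc
  · have hx : φ x + φ (-x) ≤ 0 := by simpa [φ0] using add x (-x)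
    rw [← smul_neg, hom _ _ hc]
    nlinarith
  · rw [← neg_smul, hom _ _ (neg_nonneg.2 hc)]
    linarith

theorem exists_linearMap_ge_eq_of_superlinear {E : Type*} [AddCommGroup E] [Module ℝ E]
    {φ : E → ℝ} (hom : ∀ (x : E) (c : ℝ), 0 ≤ c → φ (c • x) = c * φ x)
    (add : ∀ x y, φ x + φ y ≤ φ (x + y)) (x₀ : E) :
    ∃ g : E →ₗ[ℝ] ℝ, (∀ x, φ x ≤ g x) ∧ g x₀ = φ x₀ := by
  have φ0 : φ 0 = 0 := by simpa using hom 0 0 le_rfl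
  have hwd : ∀ c : ℝ, c • x₀ = 0 → (RingHom.id ℝ) c • φ x₀ = 0 := by
    intro c hc
    rcases smul_eq_zero.1 hc with rfl | rfl <;> simp [φ0]
  let f := LinearPMap.mkSpanSingleton' x₀ (φ x₀) hwd
  have hmaj_smul : ∀ c : ℝ, 0 < c → ∀ x : E, -φ (-(c • x)) = c * -φ (-x) := by
    intro c hc x
    rw [← smul_neg, hom _ _ hc.le]
    ring
  have hmaj_add : ∀ x y : E, -φ (-(x + y)) ≤ -φ (-x) + -φ (-y) := by
    intro x y
    rw [neg_add]
    linarith [add (-x) (-y)]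
  have hf_le : ∀ z : f.domain, f z ≤ -φ (-(z : E)) := by
    rintro ⟨z, hz⟩
    obtain ⟨c, rfl⟩ := Submodule.mem_span_singleton.1 hz
    rw [LinearPMap.mkSpanSingleton'_apply]
    exact mul_le_neg_apply_neg_smul hom add x₀ c
  obtain ⟨g, hgf, hgN⟩ := exists_extension_of_le_sublinear f (fun x => -φ (-x)) hmaj_smul hmaj_add hf_le
  refine ⟨g, fun x => ?_, ?_⟩
  · have := hgN (-x)
    rw [map_neg, neg_neg] at this
    linarith
  · exact (hgf ⟨x₀, Submodule.mem_span_singleton_self x₀⟩).trans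
      (LinearPMap.mkSpanSingleton'_apply_self _ _ _ _)

section Gambles

variable {Ω : Type*} [Fintype Ω]

theorem ip_eq_dotProduct (p f : Ω → ℝ) : ip p f = p ⬝ᵥ f := rfl

theorem LinearMap.exists_ip_eq (g : (Ω → ℝ) →ₗ[ℝ] ℝ) : ∃ p : Ω → ℝ, ∀ f, g f = ip p f := by
  classical
  exact ⟨fun i => g fun j => if i = j then 1 else 0, fun f => by
    rw [g.pi_apply_eq_sum_univ f, ip]
    exact Finset.sum_congr rfl fun i _ => mul_comm _ _⟩

theorem isPMV_iff_forall_inf'_le_ip [Nonempty Ω] {p : Ω → ℝ} :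
    IsPMV p ↔ ∀ f : Ω → ℝ, univ.inf' univ_nonempty f ≤ ip p f := by
  classical
  refine ⟨fun hp f => ?_, fun h => ⟨fun x => ?_, le_antisymm ?_ ?_⟩⟩
  · calc univ.inf' univ_nonempty f = ∑ x, p x * univ.inf' univ_nonempty f := by
          rw [← sum_mul, hp.2, one_mul]
      _ ≤ ip p f := sum_le_sum fun x _ =>
          mul_le_mul_of_nonneg_left (inf'_le f (mem_univ x)) (hp.1 x)
  · calc (0 : ℝ) ≤ univ.inf' univ_nonempty (Pi.single x 1) :=
          le_inf' _ _ fun y _ => by rcases eq_or_ne y x with rfl | hy <;> simp [*]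
      _ ≤ ip p (Pi.single x 1) := h _
      _ = p x := by simp [ip_eq_dotProduct]
  · simpa [ip] using h fun _ => -1
  · simpa [ip] using h fun _ => 1

section LowerEnvelope

variable {M : Set (Ω → ℝ)} {lP : (Ω → ℝ) → ℝ}
  (hleast : ∀ f, IsLeast {r : ℝ | ∃ p ∈ M, r = ip p f} (lP f))
include hleast

theorem inf'_le_of_isLeast_ip [Nonempty Ω] (hM : ∀ p ∈ M, IsPMV p) (f : Ω → ℝ) :
    univ.inf' univ_nonempty f ≤ lP f := by
  obtain ⟨p, hpM, hpf⟩ := (hleast f).1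
  exact hpf ▸ isPMV_iff_forall_inf'_le_ip.1 (hM p hpM) f

theorem smul_eq_of_isLeast_ip (f : Ω → ℝ) {l : ℝ} (hl : 0 ≤ l) : lP (l • f) = l * lP f := by
  refine (hleast (l • f)).unique ⟨?_, ?_⟩
  · obtain ⟨p, hpM, hpf⟩ := (hleast f).1
    exact ⟨p, hpM, by rw [ip_eq_dotProduct, dotProduct_smul, hpf]; rfl⟩
  · rintro r ⟨p, hpM, rfl⟩
    rw [ip_eq_dotProduct, dotProduct_smul, smul_eq_mul]
    exact mul_le_mul_of_nonneg_left ((hleast f).2 ⟨p, hpM, rfl⟩) hl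

theorem add_le_of_isLeast_ip (f g : Ω → ℝ) : lP f + lP g ≤ lP (f + g) := by
  obtain ⟨p, hpM, hpfg⟩ := (hleast (f + g)).1
  rw [hpfg, ip_eq_dotProduct, dotProduct_add]
  exact add_le_add ((hleast f).2 ⟨p, hpM, rfl⟩) ((hleast g).2 ⟨p, hpM, rfl⟩)

end LowerEnvelope

def credalSet (lP : (Ω → ℝ) → ℝ) : Set (Ω → ℝ) :=
  stdSimplex ℝ Ω ∩ ⋂ f, {p | lP f ≤ ip p f}

variable (lP : (Ω → ℝ) → ℝ)

theorem isCompact_credalSet : IsCompact (credalSet lP) :=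
  (isCompact_stdSimplex ℝ Ω).inter_right <| isClosed_iInter fun _ =>
    isClosed_le continuous_const (continuous_id.dotProduct continuous_const)

theorem convex_credalSet : Convex ℝ (credalSet lP) :=
  (convex_stdSimplex ℝ Ω).inter <| convex_iInter fun f =>
    convex_halfSpace_ge ⟨fun p q => add_dotProduct p q f, fun c p => smul_dotProduct c p f⟩ _

theorem isLeast_ip_credalSet [Nonempty Ω]
    (hP1 : ∀ f : Ω → ℝ, univ.inf' univ_nonempty f ≤ lP f)
    (hP2 : ∀ (f : Ω → ℝ) (l : ℝ), 0 ≤ l → lP (l • f) = l * lP f)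
    (hP3 : ∀ f g : Ω → ℝ, lP f + lP g ≤ lP (f + g)) (f : Ω → ℝ) :
    IsLeast {r : ℝ | ∃ p ∈ credalSet lP, r = ip p f} (lP f) := by
  obtain ⟨g, hge, hgf⟩ := exists_linearMap_ge_eq_of_superlinear hP2 hP3 f
  obtain ⟨p, hp⟩ := g.exists_ip_eq
  have hdom : ∀ h, lP h ≤ ip p h := fun h => hp h ▸ hge h
  have hpM : p ∈ credalSet lP :=
    ⟨isPMV_iff_forall_inf'_le_ip.2 fun h => (hP1 h).trans (hdom h), Set.mem_iInter.2 hdom⟩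
  refine ⟨⟨p, hpM, (hp f ▸ hgf).symm⟩, ?_⟩
  rintro r ⟨q, hq, rfl⟩
  exact Set.mem_iInter.1 hq.2 f

end Gambles

/-- a functional on gambles satisfies (P1)–(P3) iff it is the lower envelope
(with attained minima) of a nonempty compact convex set of probability mass vectors. -/
theorem stmt6 {Ω : Type*} [Fintype Ω] [Nonempty Ω] (lP : (Ω → ℝ) → ℝ) :
    ((∀ f : Ω → ℝ, Finset.univ.inf' Finset.univ_nonempty f ≤ lP f) ∧
     (∀ (f : Ω → ℝ) (l : ℝ), 0 ≤ l → lP (l • f) = l * lP f) ∧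
     (∀ f g : Ω → ℝ, lP f + lP g ≤ lP (f + g))) ↔
    ∃ M : Set (Ω → ℝ), M.Nonempty ∧ IsCompact M ∧ Convex ℝ M ∧
      (∀ p ∈ M, IsPMV p) ∧ ∀ f : Ω → ℝ, IsLeast {r : ℝ | ∃ p ∈ M, r = ip p f} (lP f) := by
  constructor
  · rintro ⟨hP1, hP2, hP3⟩
    have hleast := isLeast_ip_credalSet lP hP1 hP2 hP3
    obtain ⟨p, hp, -⟩ := (hleast 0).1
    exact ⟨credalSet lP, ⟨p, hp⟩, isCompact_credalSet lP, convex_credalSet lP,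
      fun q hq => hq.1, hleast⟩
  · rintro ⟨M, -, -, -, hM, hleast⟩
    exact ⟨inf'_le_of_isLeast_ip hleast hM, fun f l => smul_eq_of_isLeast_ip hleast f,
      add_le_of_isLeast_ip hleast⟩
end

section
/- Let Ω, K, b, M, E̲ and the faces M_f be as in the setting of a coherent assessment with K nonempty, and let P̲ be an extension of (K, b). Then d(P̲, E̲) ≤ max_{E ∈ ext(M)} min_{f ∈ K} max_{F ∈ ext(M_f)} ‖E − F‖, where d(P̲, E̲) = sup_{h ≠ 0} |P̲(h) − E̲(h)|/‖h‖, ext(M) is the set of extreme points of M, and ‖E − F‖ is the Euclidean distance between the probability mass vectors E and F. -/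
open scoped BigOperators ENNReal

/-- Euclidean norm of a gamble. -/
noncomputable def nrm {Ω : Type*} [Fintype Ω] (f : Ω → ℝ) : ℝ := Real.sqrt (ip f f)

/-- The distance between two real-valued functionals on gambles:
`d(F, G) = sup_{h ≠ 0} |F(h) − G(h)|/‖h‖`, a supremum in `[0, ∞]`. -/
noncomputable def dLP {Ω : Type*} [Fintype Ω] (F G : (Ω → ℝ) → ℝ) : ℝ≥0∞ :=
  ⨆ h ∈ {h : Ω → ℝ | h ≠ 0}, ENNReal.ofReal (|F h - G h| / nrm h)

/-!
Fix `h` and choose an extreme point `E` of `M` minimising `⟨·, h⟩`, so that `E̲(h) = ⟨E, h⟩`.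
For `f ∈ K`, a minimiser `q` of `⟨·, f⟩` over `M' ⊆ M` attains `b(f) = E̲(f)`, hence `q ∈ M_f`.
Then `0 ≤ P̲(h) - E̲(h) ≤ ⟨q - E, h⟩ ≤ ‖E - q‖ ‖h‖`, and by Krein–Milman the convex continuous
function `‖E - ·‖` on the compact convex face `M_f` is bounded by its values at extreme points.
-/

open Set

section KreinMilman

variable {E : Type*} [AddCommGroup E] [Module ℝ E] [TopologicalSpace E] [T2Space E]
  [IsTopologicalAddGroup E] [ContinuousSMul ℝ E] [LocallyConvexSpace ℝ E] {s : Set E}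

theorem IsCompact.exists_mem_extremePoints_isMinOn (hs : IsCompact s) (hne : s.Nonempty)
    (l : StrongDual ℝ E) : ∃ x ∈ s.extremePoints ℝ, IsMinOn l s x := by
  have hexp : IsExposed ℝ s ((-l).toExposed s) := ContinuousLinearMap.toExposed.isExposed
  obtain ⟨z, hzs, hz⟩ := hs.exists_isMinOn hne l.continuous.continuousOn
  obtain ⟨x, hx⟩ := (hexp.isCompact hs).extremePoints_nonempty
    ⟨z, hzs, fun y hy => neg_le_neg (hz hy)⟩
  exact ⟨x, hexp.isExtreme.extremePoints_subset_extremePoints hx,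
    fun y hy => neg_le_neg_iff.1 (hx.1.2 y hy)⟩

/-- Bauer's maximum principle. -/
theorem ConvexOn.le_of_forall_extremePoints_le {φ : E → ℝ} {r : ℝ} (hφ : ConvexOn ℝ univ φ)
    (hφc : Continuous φ) (hs : IsCompact s) (hsc : Convex ℝ s)
    (hr : ∀ y ∈ s.extremePoints ℝ, φ y ≤ r) {x : E} (hx : x ∈ s) : φ x ≤ r := by
  have hsub : s ⊆ {y | φ y ≤ r} := by
    rw [← closure_convexHull_extremePoints hs hsc]
    refine closure_minimal (convexHull_min hr ?_) (isClosed_le hφc continuous_const)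
    simpa using hφ.convex_le r
  exact hsub hx

theorem ConvexOn.ofReal_le_iSup_extremePoints {φ : E → ℝ} (hφ : ConvexOn ℝ univ φ)
    (hφc : Continuous φ) (hs : IsCompact s) (hsc : Convex ℝ s) {x : E} (hx : x ∈ s) :
    ENNReal.ofReal (φ x) ≤ ⨆ y ∈ s.extremePoints ℝ, ENNReal.ofReal (φ y) := by
  set c := ⨆ y ∈ s.extremePoints ℝ, ENNReal.ofReal (φ y)
  rcases eq_or_ne c ⊤ with hc | hc
  · exact hc ▸ le_top
  rw [← ENNReal.ofReal_toReal hc]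
  refine ENNReal.ofReal_le_ofReal <|
    hφ.le_of_forall_extremePoints_le hφc hs hsc (fun y hy => ?_) hx
  exact (ENNReal.ofReal_le_iff_le_toReal hc).1 (le_biSup (fun y => ENNReal.ofReal (φ y)) hy)

end KreinMilman

section Gambles

variable {Ω : Type*} [Fintype Ω]

theorem ip_eq_inner (f g : Ω → ℝ) :
    ip f g = inner ℝ (WithLp.toLp 2 f : EuclideanSpace ℝ Ω) (WithLp.toLp 2 g) := by
  simp [ip, PiLp.inner_apply, mul_comm]

theorem nrm_eq_norm (f : Ω → ℝ) : nrm f = ‖(WithLp.toLp 2 f : EuclideanSpace ℝ Ω)‖ := by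
  simp [nrm, ip, EuclideanSpace.norm_eq, sq]

theorem nrm_nonneg (f : Ω → ℝ) : 0 ≤ nrm f := Real.sqrt_nonneg _

theorem abs_ip_le_nrm_mul_nrm (f g : Ω → ℝ) : |ip f g| ≤ nrm f * nrm g := by
  rw [ip_eq_inner, nrm_eq_norm, nrm_eq_norm]
  exact abs_real_inner_le_norm _ _

theorem continuous_nrm : Continuous (nrm : (Ω → ℝ) → ℝ) := by
  rw [funext nrm_eq_norm]
  exact continuous_norm.comp (PiLp.continuous_toLp 2 _)

theorem convexOn_nrm_sub (E : Ω → ℝ) : ConvexOn ℝ univ fun z => nrm (E - z) := by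
  have := (convexOn_univ_dist (WithLp.toLp 2 E : EuclideanSpace ℝ Ω)).comp_linearMap
    (WithLp.linearEquiv 2 ℝ (Ω → ℝ)).symm.toLinearMap
  rw [preimage_univ] at this
  refine this.congr fun z _ => ?_
  simp [nrm_eq_norm, dist_eq_norm, norm_sub_rev]

noncomputable def ipLeft (g : Ω → ℝ) : StrongDual ℝ (Ω → ℝ) :=
  LinearMap.toContinuousLinearMap
    { toFun := fun p => ip p g
      map_add' := fun p q => by simp [ip, add_mul, Finset.sum_add_distrib]
      map_smul' := fun c p => by simp [ip, Finset.mul_sum, mul_assoc] }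

@[simp] theorem ipLeft_apply (g p : Ω → ℝ) : ipLeft g p = ip p g := rfl

end Gambles

section LowerEnvelope

variable {Ω : Type*} [Fintype Ω]

def IsLowerEnvelope (S : Set (Ω → ℝ)) (l : (Ω → ℝ) → ℝ) : Prop :=
  ∀ h, IsLeast {r : ℝ | ∃ p ∈ S, r = ip p h} (l h)

variable {S S' : Set (Ω → ℝ)} {l l' : (Ω → ℝ) → ℝ}

namespace IsLowerEnvelope

theorem le_ip (hl : IsLowerEnvelope S l) {p : Ω → ℝ} (hp : p ∈ S) (h : Ω → ℝ) : l h ≤ ip p h :=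
  (hl h).2 ⟨p, hp, rfl⟩

theorem exists_ip_eq (hl : IsLowerEnvelope S l) (h : Ω → ℝ) : ∃ p ∈ S, ip p h = l h := by
  obtain ⟨p, hp, hph⟩ := (hl h).1
  exact ⟨p, hp, hph.symm⟩

theorem le_of_subset (hl : IsLowerEnvelope S l) (hl' : IsLowerEnvelope S' l') (hS : S' ⊆ S)
    (h : Ω → ℝ) : l h ≤ l' h := by
  obtain ⟨p, hp, hph⟩ := hl'.exists_ip_eq h
  exact hph ▸ hl.le_ip (hS hp) h

theorem subset_credal (hl' : IsLowerEnvelope S' l') (hpmv : ∀ p ∈ S', IsPMV p)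
    {K : Set (Ω → ℝ)} {b : (Ω → ℝ) → ℝ} (hb : ∀ g ∈ K, l' g = b g) :
    S' ⊆ {p | IsPMV p ∧ ∀ g ∈ K, b g ≤ ip p g} :=
  fun p hp => ⟨hpmv p hp, fun g hg => hb g hg ▸ hl'.le_ip hp g⟩

theorem exists_mem_extremePoints_ip_eq (hl : IsLowerEnvelope S l) (hS : IsCompact S)
    (h : Ω → ℝ) : ∃ E ∈ S.extremePoints ℝ, ip E h = l h := by
  obtain ⟨p, hp, -⟩ := hl.exists_ip_eq h
  obtain ⟨E, hE, hEmin⟩ := hS.exists_mem_extremePoints_isMinOn ⟨p, hp⟩ (ipLeft h)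
  obtain ⟨q, hq, hqh⟩ := hl.exists_ip_eq h
  refine ⟨E, hE, le_antisymm ?_ (hl.le_ip (extremePoints_subset hE) h)⟩
  exact hqh ▸ hEmin hq

theorem abs_sub_div_nrm_le (hl : IsLowerEnvelope S l) (hl' : IsLowerEnvelope S' l')
    (hS : S' ⊆ S) {E q h : Ω → ℝ} (hE : ip E h = l h) (hq : q ∈ S') :
    |l' h - l h| / nrm h ≤ nrm (E - q) := by
  have hgap : l' h - l h ≤ nrm (E - q) * nrm h :=
    calc l' h - l h ≤ ip q h - ip E h := by linarith [hl'.le_ip hq h]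
      _ = -ip (E - q) h := by simp [ip, sub_mul, Finset.sum_sub_distrib]
      _ ≤ nrm (E - q) * nrm h := (neg_le_abs _).trans (abs_ip_le_nrm_mul_nrm _ _)
  rw [abs_of_nonneg (sub_nonneg.2 (hl.le_of_subset hl' hS h))]
  exact div_le_of_le_mul₀ (nrm_nonneg h) (nrm_nonneg _) hgap

end IsLowerEnvelope

end LowerEnvelope

section CredalSet

variable {Ω : Type*} [Fintype Ω]

theorem credal_eq_stdSimplex_inter (K : Set (Ω → ℝ)) (b : (Ω → ℝ) → ℝ) :
    {p | IsPMV p ∧ ∀ g ∈ K, b g ≤ ip p g} =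
      stdSimplex ℝ Ω ∩ ⋂ g ∈ K, {p | b g ≤ ipLeft g p} := by
  ext p
  simp [IsPMV, stdSimplex]

theorem isCompact_credal (K : Set (Ω → ℝ)) (b : (Ω → ℝ) → ℝ) :
    IsCompact {p | IsPMV p ∧ ∀ g ∈ K, b g ≤ ip p g} := by
  rw [credal_eq_stdSimplex_inter]
  exact (isCompact_stdSimplex ℝ Ω).inter_right <|
    isClosed_biInter fun g _ => isClosed_le continuous_const (ipLeft g).continuous

theorem convex_credal (K : Set (Ω → ℝ)) (b : (Ω → ℝ) → ℝ) :
    Convex ℝ {p | IsPMV p ∧ ∀ g ∈ K, b g ≤ ip p g} := by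
  rw [credal_eq_stdSimplex_inter]
  exact (convex_stdSimplex ℝ Ω).inter <|
    convex_iInter₂ fun g _ => convex_halfSpace_ge (ipLeft g).toLinearMap.isLinear (b g)

end CredalSet

theorem stmt16_general {Ω : Type*} [Fintype Ω]
    (K : Finset (Ω → ℝ)) (b : (Ω → ℝ) → ℝ)
    (M : Set (Ω → ℝ)) (hM : M = {p | IsPMV p ∧ ∀ g ∈ K, b g ≤ ip p g})
    (lE : (Ω → ℝ) → ℝ)
    (hlE : ∀ h : Ω → ℝ, IsLeast {r : ℝ | ∃ p ∈ M, r = ip p h} (lE h))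
    (hcoh : ∀ g ∈ K, lE g = b g)
    (M' : Set (Ω → ℝ)) (hpmv' : ∀ p ∈ M', IsPMV p)
    (lP : (Ω → ℝ) → ℝ)
    (hlP : ∀ h : Ω → ℝ, IsLeast {r : ℝ | ∃ p ∈ M', r = ip p h} (lP h))
    (hb' : ∀ g ∈ K, lP g = b g) :
    dLP lP lE ≤
      ⨆ E ∈ Set.extremePoints ℝ M, ⨅ f ∈ K,
        ⨆ F ∈ Set.extremePoints ℝ {q ∈ M | ip q f = lE f},
          ENNReal.ofReal (nrm (E - F)) := by
  have hM'M : M' ⊆ M := hM ▸ IsLowerEnvelope.subset_credal hlP hpmv' hb'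
  have hMcpt : IsCompact M := hM ▸ isCompact_credal (K : Set (Ω → ℝ)) b
  have hMconv : Convex ℝ M := hM ▸ convex_credal (K : Set (Ω → ℝ)) b
  refine iSup₂_le fun h _ => ?_
  obtain ⟨E, hEext, hEh⟩ := IsLowerEnvelope.exists_mem_extremePoints_ip_eq hlE hMcpt h
  refine le_trans ?_ (le_biSup _ hEext)
  refine le_iInf₂ fun f hf => ?_
  obtain ⟨q, hqM', hqf⟩ := IsLowerEnvelope.exists_ip_eq hlP f
  have hq : q ∈ {q ∈ M | ip q f = lE f} := ⟨hM'M hqM', by rw [hqf, hb' f hf, hcoh f hf]⟩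
  calc ENNReal.ofReal (|lP h - lE h| / nrm h)
      ≤ ENNReal.ofReal (nrm (E - q)) :=
        ENNReal.ofReal_le_ofReal (IsLowerEnvelope.abs_sub_div_nrm_le hlE hlP hM'M hEh hqM')
    _ ≤ _ := (convexOn_nrm_sub E).ofReal_le_iSup_extremePoints
        (continuous_nrm.comp (continuous_const.sub continuous_id))
        (hMcpt.inter_right (isClosed_eq (ipLeft f).continuous continuous_const))
        (hMconv.inter (convex_hyperplane (ipLeft f).toLinearMap.isLinear _)) hq

/-- for any extension `P̲` of a coherent assessment `(K, b)`,
`d(P̲, E̲) ≤ max_{E ∈ ext(M)} min_{f ∈ K} max_{F ∈ ext(M_f)} ‖E − F‖`. -/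
theorem stmt16 {Ω : Type*} [Fintype Ω] [Nonempty Ω]
    (K : Finset (Ω → ℝ)) (hK : K.Nonempty) (b : (Ω → ℝ) → ℝ)
    (M : Set (Ω → ℝ)) (hM : M = {p | IsPMV p ∧ ∀ g ∈ K, b g ≤ ip p g})
    (hMne : M.Nonempty)
    (lE : (Ω → ℝ) → ℝ)
    (hlE : ∀ h : Ω → ℝ, IsLeast {r : ℝ | ∃ p ∈ M, r = ip p h} (lE h))
    (hcoh : ∀ g ∈ K, lE g = b g)
    (M' : Set (Ω → ℝ)) (hne' : M'.Nonempty) (hcomp' : IsCompact M')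
    (hconv' : Convex ℝ M') (hpmv' : ∀ p ∈ M', IsPMV p)
    (lP : (Ω → ℝ) → ℝ)
    (hlP : ∀ h : Ω → ℝ, IsLeast {r : ℝ | ∃ p ∈ M', r = ip p h} (lP h))
    (hb' : ∀ g ∈ K, lP g = b g) :
    dLP lP lE ≤
      ⨆ E ∈ Set.extremePoints ℝ M, ⨅ f ∈ K,
        ⨆ F ∈ Set.extremePoints ℝ {q ∈ M | ip q f = lE f},
          ENNReal.ofReal (nrm (E - F)) :=
  stmt16_general K b M hM lE hlE hcoh M' hpmv' lP hlP hb'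
end
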